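/- arXiv:1702.03746 — 5 statements merged into one kernel-verified Lean document; each statement's English description precedes it below -/
import Mathlib

section
/- Let m < 0 and let u, g, Ψ be real numbers with 0 < u < g. Suppose that for every p > 0 one has (u^{m(p+1)} − g^{m(p+1)})/(p+1) ≤ ((u^{mp} − g^{mp})/p) · Ψ and additionally Ψ ≤ u^m. Then Ψ = u^m. -/
/-!
Write `A = u^{mp} - g^{mp}`, which is positive since `m < 0` and `u < g`. Because `g^m < u^m`,
`u^{m(p+1)} - g^{m(p+1)} = u^{mp} u^m - g^{mp} g^m ≥ u^m A`, so the hypothesis gives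
`u^m A / (p+1) ≤ A Ψ / p`, i.e. `p/(p+1) · u^m ≤ Ψ` for every `p > 0`. Letting `p → ∞` yields
`u^m ≤ Ψ`.
-/

open Filter Topology

lemma le_of_forall_div_add_one_mul_le {a b : ℝ} (h : ∀ p : ℝ, 0 < p → p / (p + 1) * a ≤ b) :
    a ≤ b := by
  have hlim : Tendsto (fun n : ℕ => (n : ℝ) / (n + 1) * a) atTop (𝓝 a) := by
    simpa using (tendsto_natCast_div_add_atTop (1 : ℝ)).mul_const a
  refine le_of_tendsto hlim ?_
  filter_upwards [eventually_gt_atTop 0] with n hn using h n (by exact_mod_cast hn)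

lemma Real.rpow_mul_sub_rpow_mul_le_rpow_add_one_sub {m u g : ℝ} (hm : m ≤ 0) (hu : 0 < u)
    (hug : u ≤ g) (p : ℝ) :
    u ^ m * (u ^ (m * p) - g ^ (m * p)) ≤ u ^ (m * (p + 1)) - g ^ (m * (p + 1)) := by
  have hg : 0 < g := hu.trans_le hug
  have hgm : g ^ m ≤ u ^ m := Real.rpow_le_rpow_of_nonpos hu hug hm
  have hgmp : 0 ≤ g ^ (m * p) := (Real.rpow_pos_of_pos hg _).le
  rw [mul_add, mul_one, Real.rpow_add hu, Real.rpow_add hg]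
  nlinarith

/-- Identification of the boundary flux: if 0 < u < g, m < 0, Ψ ≤ u^m, and for every
p > 0 one has (u^{m(p+1)} − g^{m(p+1)})/(p+1) ≤ ((u^{mp} − g^{mp})/p)·Ψ, then Ψ = u^m. -/
theorem stmt6 (m u g Ψ : ℝ) (hm : m < 0) (hu : 0 < u) (hug : u < g)
    (h : ∀ p : ℝ, 0 < p →
      (u ^ (m * (p + 1)) - g ^ (m * (p + 1))) / (p + 1) ≤
        (u ^ (m * p) - g ^ (m * p)) / p * Ψ)
    (hΨ : Ψ ≤ u ^ m) : Ψ = u ^ m := by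
  refine hΨ.antisymm (le_of_forall_div_add_one_mul_le fun p hp => ?_)
  set A := u ^ (m * p) - g ^ (m * p)
  have hA : 0 < A := sub_pos.2 (Real.rpow_lt_rpow_of_neg hu hug (mul_neg_of_neg_of_pos hm hp))
  have hflux : u ^ m * A / (p + 1) ≤ A / p * Ψ :=
    (div_le_div_of_nonneg_right
      (Real.rpow_mul_sub_rpow_mul_le_rpow_add_one_sub hm.le hu hug.le p) (by linarith)).trans
      (h p hp)
  calc p / (p + 1) * u ^ m
      = p / A * (u ^ m * A / (p + 1)) := by field_simp
    _ ≤ p / A * (A / p * Ψ) := by gcongr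
    _ = Ψ := by field_simp
end

section
/- Let m > 0 and let u, g be nonnegative real numbers such that for all real numbers 0 < a < b, (1/(m+1))·|T_a^b(g)^{m+1} − T_a^b(u)^{m+1}| ≤ T_a^b(u)^m · |T_a^b(g) − T_a^b(u)|, where T_a^b(s) = max(min(b,s),a). Then u ≥ g. -/
/-- Degenerate case trace inequality implies u ≥ g, with T_a^b(s) = max(min(b,s),a). -/
theorem stmt7 (m u g : ℝ) (hm : 0 < m) (hu : 0 ≤ u) (hg : 0 ≤ g)
    (h : ∀ a b : ℝ, 0 < a → a < b →
      1 / (m + 1) * |max (min b g) a ^ (m + 1) - max (min b u) a ^ (m + 1)| ≤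
        max (min b u) a ^ m * |max (min b g) a - max (min b u) a|) :
    g ≤ u := by
  by_contra hlt
  push_neg at hlt
  have hm1 : (0:ℝ) < m + 1 := by linarith
  rcases eq_or_lt_of_le hu with hu0 | hu0
  · -- u = 0
    subst hu0
    have hgpos : 0 < g := hlt
    -- choose a = g * t
    set t : ℝ := min ((1 / (2*(m+1))) ^ (1/m)) (1/2) with ht
    have htpos : 0 < t := by
      apply lt_min
      · exact Real.rpow_pos_of_pos (by positivity) _
      · norm_num
    have ht1 : t < 1 := lt_of_le_of_lt (min_le_right _ _) (by norm_num)
    set a : ℝ := g * t with ha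
    have hapos : 0 < a := by positivity
    have hag : a < g := by
      calc a = g * t := rfl
        _ < g * 1 := by exact mul_lt_mul_of_pos_left ht1 hgpos
        _ = g := mul_one g
    have h1 := h a g hapos hag
    rw [min_self, max_eq_left hag.le, min_eq_right hg, max_eq_right hapos.le] at h1
    -- bounds
    have htm : t ^ m ≤ 1 / (2*(m+1)) := by
      have := Real.rpow_le_rpow htpos.le (min_le_left ((1 / (2*(m+1))) ^ (1/m)) (1/2)) hm.le
      calc t ^ m ≤ (((1:ℝ) / (2*(m+1))) ^ (1/m)) ^ m := this
        _ = ((1:ℝ) / (2*(m+1))) ^ ((1/m) * m) := by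
            rw [← Real.rpow_mul (by positivity)]
        _ = 1 / (2*(m+1)) := by
            rw [one_div m, inv_mul_cancel₀ hm.ne', Real.rpow_one]
    have htm1 : t ^ (m+1) ≤ 1 / 2 := by
      have h2 : t ^ (m+1) ≤ ((1:ℝ)/2) ^ (m+1) :=
        Real.rpow_le_rpow htpos.le (min_le_right _ _) (by linarith)
      have h3 : ((1:ℝ)/2) ^ (m+1) ≤ ((1:ℝ)/2) ^ (1:ℝ) :=
        Real.rpow_le_rpow_of_exponent_ge (by norm_num) (by norm_num) (by linarith)
      rw [Real.rpow_one] at h3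
      linarith
    have ham : a ^ m = g ^ m * t ^ m := Real.mul_rpow hg htpos.le
    have ham1 : a ^ (m+1) = g ^ (m+1) * t ^ (m+1) := Real.mul_rpow hg htpos.le
    have hgm1 : g ^ (m+1) = g ^ m * g := Real.rpow_add_one hgpos.ne' m
    have hgm1pos : 0 < g ^ (m+1) := Real.rpow_pos_of_pos hgpos _
    have hgmpos : 0 < g ^ m := Real.rpow_pos_of_pos hgpos _
    have hlhs : g ^ (m+1) / 2 ≤ g ^ (m+1) - a ^ (m+1) := by
      have : a ^ (m+1) ≤ g ^ (m+1) / 2 := by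
        rw [ham1]
        calc g ^ (m+1) * t ^ (m+1) ≤ g ^ (m+1) * (1/2) := by
              exact mul_le_mul_of_nonneg_left htm1 hgm1pos.le
          _ = g ^ (m+1) / 2 := by ring
      linarith
    have hrhs : a ^ m * (g - a) < g ^ (m+1) / (2*(m+1)) := by
      have h4 : a ^ m * (g - a) < a ^ m * g := by
        have : 0 < a ^ m := Real.rpow_pos_of_pos hapos _
        nlinarith
      have h5 : a ^ m * g ≤ g ^ (m+1) / (2*(m+1)) := by
        rw [ham, hgm1]
        calc g ^ m * t ^ m * g ≤ g ^ m * (1/(2*(m+1))) * g := by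
              apply mul_le_mul_of_nonneg_right _ hgpos.le
              exact mul_le_mul_of_nonneg_left htm hgmpos.le
          _ = g ^ m * g / (2*(m+1)) := by ring
      linarith
    -- combine
    have hab : a ^ (m+1) ≤ g ^ (m+1) := by
      have := Real.rpow_le_rpow hapos.le hag.le (by linarith : (0:ℝ) ≤ m+1)
      exact this
    rw [abs_of_nonneg (by linarith : (0:ℝ) ≤ g ^ (m+1) - a ^ (m+1)),
        abs_of_nonneg (by linarith : (0:ℝ) ≤ g - a)] at h1
    have key : 1 / (m+1) * (g ^ (m+1) - a ^ (m+1)) ≥ 1 / (m+1) * (g ^ (m+1) / 2) := by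
      apply mul_le_mul_of_nonneg_left hlhs (by positivity)
    have : 1 / (m+1) * (g ^ (m+1) / 2) = g ^ (m+1) / (2*(m+1)) := by
      rw [div_mul_div_comm, one_mul, mul_comm (m+1) 2]
    linarith
  · -- 0 < u
    have h1 := h u g hu0 hlt
    rw [min_self, max_eq_left hlt.le, min_eq_right hlt.le, max_self] at h1
    have hum1 : u ^ (m+1) ≤ g ^ (m+1) :=
      Real.rpow_le_rpow hu hlt.le (by linarith)
    rw [abs_of_nonneg (by linarith : (0:ℝ) ≤ g ^ (m+1) - u ^ (m+1)),
        abs_of_nonneg (by linarith : (0:ℝ) ≤ g - u)] at h1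
    -- Bernoulli
    set z : ℝ := g / u - 1 with hz
    have hzpos : 0 < z := by
      have h6 : 1 < g / u := (one_lt_div hu0).mpr hlt
      rw [hz]; linarith
    have bern := one_add_mul_self_lt_rpow_one_add (by linarith : (-1:ℝ) ≤ z)
      hzpos.ne' (by linarith : (1:ℝ) < m + 1)
    -- bern : 1 + (1 + m) * z < (1 + z) ^ (1 + m)  -- check form
    have h1z : 1 + z = g / u := by rw [hz]; ring
    have hupow : 0 < u ^ (m+1) := Real.rpow_pos_of_pos hu0 _
    have hdiv : (g / u) ^ (m+1) = g ^ (m+1) / u ^ (m+1) := Real.div_rpow hg hu _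
    have hum : u ^ (m+1) = u ^ m * u := Real.rpow_add_one hu0.ne' m
    rw [h1z] at bern
    have key := mul_lt_mul_of_pos_right bern hupow
    rw [hdiv] at key
    have hne : u ^ (m+1) ≠ 0 := hupow.ne'
    rw [div_mul_cancel₀ _ hne] at key
    -- key : (1 + (1+m)*z) * u^(m+1) < g^(m+1)
    have expand : (1 + (m + 1) * z) * u ^ (m+1)
        = u ^ (m+1) + (m+1) * (u ^ m * (g - u)) := by
      rw [hz, hum]
      field_simp
    rw [expand] at key
    have h1' : g ^ (m+1) - u ^ (m+1) ≤ (m+1) * (u ^ m * (g - u)) := by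
      have := mul_le_mul_of_nonneg_left h1 hm1.le
      rw [← mul_assoc] at this
      rw [mul_one_div, div_self hm1.ne', one_mul] at this
      linarith [this]
    linarith
end

section
/- Let 0 < m < 1, F ≥ 0, N ≥ 1, and let h be a positive differentiable function on an interval I ⊂ (0,∞) satisfying m·h'(ρ) = h(ρ)^{1−m}·(h(ρ) − F) − (N−1)·h(ρ)/ρ. Define H(ρ) := h(ρ) − F − N·h(ρ)^m/ρ. Then at any point ρ ∈ I with H(ρ) ≥ 0, one has H'(ρ) ≥ h(ρ)/(m·ρ) > 0. Consequently H has at most one zero in I. -/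
/-- For 0 < m < 1, along the radial ODE m h' = h^{1−m}(h−F) − (N−1)h/ρ, the function
H(ρ) = h(ρ) − F − N h(ρ)^m/ρ satisfies H' ≥ h/(mρ) > 0 wherever H ≥ 0; hence H has at
most one zero in the interval I. -/
theorem stmt14 (m F : ℝ) (N : ℕ) (hm : 0 < m) (hm1 : m < 1) (hF : 0 ≤ F) (hN : 1 ≤ N)
    (I : Set ℝ) (hI : I ⊆ Set.Ioi 0) (hIc : I.OrdConnected)
    (h h' : ℝ → ℝ) (hpos : ∀ ρ ∈ I, 0 < h ρ)
    (hder : ∀ ρ ∈ I, HasDerivAt h (h' ρ) ρ)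
    (hode : ∀ ρ ∈ I, m * h' ρ = h ρ ^ (1 - m) * (h ρ - F) - ((N : ℝ) - 1) * h ρ / ρ)
    (H : ℝ → ℝ) (hH : H = fun ρ => h ρ - F - N * h ρ ^ m / ρ) :
    (∀ ρ ∈ I, 0 ≤ H ρ → h ρ / (m * ρ) ≤ deriv H ρ ∧ 0 < h ρ / (m * ρ)) ∧
    {ρ ∈ I | H ρ = 0}.Subsingleton := by
  have key : ∀ ρ ∈ I, HasDerivAt H
      (h ρ / (m * ρ) + H ρ * (h ρ ^ (1 - m) / m - (N : ℝ) / ρ)) ρ := by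
    intro ρ hρI
    have hρ : 0 < ρ := hI hρI
    have hne : ρ ≠ 0 := hρ.ne'
    have ha : 0 < h ρ := hpos ρ hρI
    have hb : 0 < h ρ ^ m := Real.rpow_pos_of_pos ha m
    have d1 := hder ρ hρI
    have dm : HasDerivAt (fun x => h x ^ m) (h' ρ * m * h ρ ^ (m - 1)) ρ :=
      d1.rpow_const (Or.inl ha.ne')
    have dH : HasDerivAt H (h' ρ - (((N : ℝ) * (h' ρ * m * h ρ ^ (m - 1))) * ρ -
        ((N : ℝ) * h ρ ^ m) * 1) / ρ ^ 2) ρ := by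
      rw [hH]
      exact (d1.sub_const F).sub ((dm.const_mul (N : ℝ)).div (hasDerivAt_id' ρ) hne)
    convert dH using 1
    have e1 : h ρ ^ (m - 1) = h ρ ^ m / h ρ := by
      rw [eq_div_iff ha.ne', ← Real.rpow_add_one ha.ne']
      norm_num
    have e2 : h ρ ^ (1 - m) = h ρ / h ρ ^ m := by
      rw [eq_div_iff hb.ne', ← Real.rpow_add ha]
      norm_num
    have ode := hode ρ hρI
    rw [e2] at ode
    have hd' : h' ρ = (h ρ / h ρ ^ m * (h ρ - F) - ((N : ℝ) - 1) * h ρ / ρ) / m := by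
      rw [eq_div_iff hm.ne']
      linarith
    rw [hH]
    simp only [e1, e2, hd']
    field_simp
    ring
  -- the first part as a standalone fact (also reused below)
  have main : ∀ ρ ∈ I, 0 ≤ H ρ →
      0 ≤ h ρ ^ (1 - m) / m - (N : ℝ) / ρ := by
    intro ρ hρI hHρ
    have hρ : 0 < ρ := hI hρI
    have ha : 0 < h ρ := hpos ρ hρI
    have hb : 0 < h ρ ^ m := Real.rpow_pos_of_pos ha m
    have e2 : h ρ ^ (1 - m) = h ρ / h ρ ^ m := by
      rw [eq_div_iff hb.ne', ← Real.rpow_add ha]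
      norm_num
    have hNle : (N : ℝ) * h ρ ^ m / ρ ≤ h ρ := by
      rw [hH] at hHρ
      simp only at hHρ
      linarith
    have h1 : (N : ℝ) / ρ ≤ h ρ / h ρ ^ m := by
      rw [div_le_div_iff₀ hρ hb]
      rw [div_le_iff₀ hρ] at hNle
      linarith
    have h3 : h ρ / h ρ ^ m ≤ h ρ / h ρ ^ m / m := by
      rw [le_div_iff₀ hm]
      nlinarith [div_pos ha hb]
    rw [e2]
    linarith
  have part1 : ∀ ρ ∈ I, 0 ≤ H ρ → h ρ / (m * ρ) ≤ deriv H ρ ∧ 0 < h ρ / (m * ρ) := by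
    intro ρ hρI hHρ
    have hρ : 0 < ρ := hI hρI
    have ha : 0 < h ρ := hpos ρ hρI
    refine ⟨?_, div_pos ha (mul_pos hm hρ)⟩
    rw [(key ρ hρI).deriv]
    have := mul_nonneg hHρ (main ρ hρI hHρ)
    linarith
  refine ⟨part1, ?_⟩
  -- uniqueness of zeros
  have claim : ∀ x y, x ∈ I → y ∈ I → H x = 0 → H y = 0 → x < y → False := by
    intro x y hxI hyI hHx hHy hxy
    have hsub : Set.Icc x y ⊆ I := hIc.out hxI hyI
    -- derivative at a zero point is positive
    have dzero : ∀ c ∈ I, H c = 0 → ∃ d, HasDerivAt H d c ∧ 0 < d := by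
      intro c hcI hc
      refine ⟨_, key c hcI, ?_⟩
      rw [hc]
      have : 0 < h c / (m * c) := div_pos (hpos c hcI) (mul_pos hm (hI hcI))
      linarith
    -- step 1: find x₀ ∈ (x, y) with H x₀ > 0
    obtain ⟨d, hd, hdpos⟩ := dzero x hxI hHx
    have hslope : Filter.Tendsto (slope H x) (nhdsWithin x {x}ᶜ) (nhds d) :=
      hasDerivAt_iff_tendsto_slope.mp hd
    have ev1 : ∀ᶠ t in nhdsWithin x (Set.Ioi x), 0 < slope H x t :=
      (hslope.eventually (eventually_gt_nhds hdpos)).filter_mono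
        (nhdsWithin_mono x (fun t ht => (ne_of_gt ht)))
    have ev2 : ∀ᶠ t in nhdsWithin x (Set.Ioi x), t < y :=
      ((eventually_lt_nhds hxy).filter_mono nhdsWithin_le_nhds)
    have ev3 : ∀ᶠ t in nhdsWithin x (Set.Ioi x), x < t :=
      eventually_mem_nhdsWithin
    obtain ⟨x₀, hs0, hx0y, hxx0⟩ := (ev1.and (ev2.and ev3)).exists
    have hHx0 : 0 < H x₀ := by
      have : slope H x x₀ = H x₀ / (x₀ - x) := by
        rw [slope_def_field, hHx]; ring
      rw [this] at hs0
      have := mul_pos hs0 (sub_pos.mpr hxx0)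
      rwa [div_mul_cancel₀ _ (sub_pos.mpr hxx0).ne'] at this
    -- step 2: infimum of the set where H ≤ 0 on [x₀, y]
    set S : Set ℝ := {t ∈ Set.Icc x₀ y | H t ≤ 0} with hS
    have hsub' : Set.Icc x₀ y ⊆ I := fun t ht => hsub ⟨le_trans hxx0.le ht.1, ht.2⟩
    have hcont : ContinuousOn H (Set.Icc x₀ y) := fun t ht =>
      ((key t (hsub' ht)).continuousAt).continuousWithinAt
    have hSclosed : IsClosed S := by
      have : S = Set.Icc x₀ y ∩ H ⁻¹' Set.Iic 0 := by
        ext t; simp [hS, Set.mem_sep_iff]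
      rw [this]
      exact hcont.preimage_isClosed_of_isClosed isClosed_Icc isClosed_Iic
    have hyS : y ∈ S := ⟨⟨hx0y.le, le_refl y⟩, le_of_eq hHy⟩
    have hbdd : BddBelow S := ⟨x₀, fun t ht => ht.1.1⟩
    set c := sInf S with hc
    have hcS : c ∈ S := hSclosed.csInf_mem ⟨y, hyS⟩ hbdd
    have hx0c : x₀ < c := by
      rcases lt_or_eq_of_le hcS.1.1 with h1 | h1
      · exact h1
      · exfalso; rw [h1] at hHx0; linarith [hcS.2]
    -- H > 0 on [x₀, c)
    have hHpos : ∀ t ∈ Set.Ico x₀ c, 0 < H t := by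
      intro t ht
      by_contra hcon
      push_neg at hcon
      have : t ∈ S := ⟨⟨ht.1, le_trans ht.2.le hcS.1.2⟩, hcon⟩
      exact absurd (csInf_le hbdd this) (not_le.mpr ht.2)
    -- H c = 0
    have hcI : c ∈ I := hsub' hcS.1
    have hHc : H c = 0 := by
      have htend : Filter.Tendsto H (nhdsWithin c (Set.Iio c)) (nhds (H c)) :=
        ((key c hcI).continuousAt.tendsto).mono_left nhdsWithin_le_nhds
      have hev : ∀ᶠ t in nhdsWithin c (Set.Iio c), 0 ≤ H t := by
        have e1 : ∀ᶠ t in nhdsWithin c (Set.Iio c), x₀ < t :=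
          (eventually_gt_nhds hx0c).filter_mono nhdsWithin_le_nhds
        have e2 : ∀ᶠ t in nhdsWithin c (Set.Iio c), t < c := eventually_mem_nhdsWithin
        filter_upwards [e1, e2] with t ht1 ht2
        exact (hHpos t ⟨ht1.le, ht2⟩).le
      have : (0:ℝ) ≤ H c := ge_of_tendsto htend hev
      linarith [hcS.2]
    -- derivative positive at c gives H < 0 just left of c, contradiction
    obtain ⟨d', hd', hd'pos⟩ := dzero c hcI hHc
    have hslope' : Filter.Tendsto (slope H c) (nhdsWithin c {c}ᶜ) (nhds d') :=
      hasDerivAt_iff_tendsto_slope.mp hd'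
    have f1 : ∀ᶠ t in nhdsWithin c (Set.Iio c), 0 < slope H c t :=
      (hslope'.eventually (eventually_gt_nhds hd'pos)).filter_mono
        (nhdsWithin_mono c (fun t ht => (ne_of_lt ht)))
    have f2 : ∀ᶠ t in nhdsWithin c (Set.Iio c), x₀ < t :=
      (eventually_gt_nhds hx0c).filter_mono nhdsWithin_le_nhds
    have f3 : ∀ᶠ t in nhdsWithin c (Set.Iio c), t < c := eventually_mem_nhdsWithin
    obtain ⟨t, hst, hx0t, htc⟩ := (f1.and (f2.and f3)).exists
    have hHt : H t < 0 := by
      have hs : slope H c t = H t / (t - c) := by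
        rw [slope_def_field, hHc]; ring
      rw [hs] at hst
      have hnez : t - c ≠ 0 := sub_ne_zero.mpr htc.ne
      have heq : H t = H t / (t - c) * (t - c) := (div_mul_cancel₀ _ hnez).symm
      rw [heq]
      exact mul_neg_of_pos_of_neg hst (sub_neg.mpr htc)
    linarith [hHpos t ⟨hx0t.le, htc⟩]
  intro a ha b hb
  by_contra hab
  rcases lt_or_gt_of_ne hab with hlt | hgt
  · exact absurd (claim a b ha.1 hb.1 ha.2 hb.2 hlt) not_false
  · exact absurd (claim b a hb.1 ha.1 hb.2 ha.2 hgt) not_false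
end

section
/- Let α > β > 0, r > 0 with ((α−β)/β)·r ≤ 1, R > r, and N = 1. Define w(x) = C x for |x| ≤ r and w(x) = C r·sign(x) for r < |x| < R, where C = β^{−1}(β−α). Then |w(x)| ≤ 1 for all |x| ≤ R, the field z := β·w is Lipschitz continuous, and z'(x) = β−α for |x| < r while z'(x) = 0 for r < |x| < R; hence u ≡ β solves u − f = z' for f = α on (−r,r) and f = β on (−R,−r)∪(r,R). -/
/-- In one dimension, the field w(x) = Cx on |x| ≤ r and w(x) = Cr·sign(x) outside,
with C = β⁻¹(β−α), satisfies |w| ≤ 1 on [−R,R], z = βw is Lipschitz, z' = β−α on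
(−r,r), z' = 0 on r < |x| < R; hence u ≡ β solves u − f = z' for the piecewise datum f. -/
theorem stmt15 (α β r R : ℝ) (hβ : 0 < β) (hαβ : β < α)
    (hr : 0 < r) (hrc : (α - β) / β * r ≤ 1) (hR : r < R)
    (C : ℝ) (hC : C = β⁻¹ * (β - α))
    (w : ℝ → ℝ) (hw : w = fun x => if |x| ≤ r then C * x else C * r * Real.sign x)
    (f : ℝ → ℝ) (hf : f = fun x => if |x| < r then α else β) :
    (∀ x, |x| ≤ R → |w x| ≤ 1) ∧
    (∃ K : NNReal, LipschitzOnWith K (fun x => β * w x) (Set.Icc (-R) R)) ∧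
    (∀ x, |x| < r → HasDerivAt (fun y => β * w y) (β - α) x) ∧
    (∀ x, r < |x| → |x| < R → HasDerivAt (fun y => β * w y) 0 x) ∧
    (∀ x, |x| < R → |x| ≠ r → HasDerivAt (fun y => β * w y) (β - f x) x) := by
  have hCabs : |C| * r ≤ 1 := by
    have : |C| = (α - β) / β := by
      rw [hC, abs_mul, abs_inv, abs_of_pos hβ, abs_of_neg (by linarith), div_eq_inv_mul]
      ring
    rw [this]; exact hrc
  have hβC : β * C = β - α := by
    rw [hC]; field_simp
  -- clamp representation
  have hclamp : ∀ x, w x = C * max (-r) (min x r) := by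
    intro x
    rw [hw]
    by_cases h : |x| ≤ r
    · obtain ⟨h1, h2⟩ := abs_le.mp h
      simp only [if_pos h, min_eq_left h2, max_eq_right h1]
    · push_neg at h
      rcases lt_or_ge x 0 with hx | hx
      · have hxr : x < -r := by
          rcases abs_cases x with ⟨he, _⟩ | ⟨he, _⟩ <;> linarith
        simp [h.not_ge, Real.sign_of_neg hx, min_eq_left (by linarith : x ≤ r),
          max_eq_left (by linarith : x ≤ -r)]
      · have hx0 : 0 < x := lt_of_le_of_ne hx (by rintro rfl; simp at h; linarith)
        have hxr : r < x := by
          rcases abs_cases x with ⟨he, _⟩ | ⟨he, _⟩ <;> linarith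
        simp [h.not_ge, Real.sign_of_pos hx0, min_eq_right hxr.le,
          max_eq_right (by linarith : -r ≤ r)]
  have part3 : ∀ x, |x| < r → HasDerivAt (fun y => β * w y) (β - α) x := by
    intro x hx
    have hd : HasDerivAt (fun y => β * C * y) (β * C) x := by
      simpa using (hasDerivAt_id x).const_mul (β * C)
    have hev : (fun y => β * w y) =ᶠ[nhds x] fun y => β * C * y := by
      have ho : IsOpen {y : ℝ | |y| < r} := isOpen_lt (continuous_abs) continuous_const
      filter_upwards [ho.mem_nhds hx] with y hy
      have hy' : |y| < r := hy
      rw [hw]; simp only [if_pos hy'.le]; ring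
    rw [← hβC]
    exact hd.congr_of_eventuallyEq hev
  have part4 : ∀ x, r < |x| → |x| < R → HasDerivAt (fun y => β * w y) 0 x := by
    intro x hx hxR
    have hx0 : x ≠ 0 := by intro h; rw [h] at hx; simp at hx; linarith
    have hd : HasDerivAt (fun _ : ℝ => β * (C * r * Real.sign x)) 0 x := hasDerivAt_const _ _
    have hev : (fun y => β * w y) =ᶠ[nhds x] fun _ => β * (C * r * Real.sign x) := by
      rcases lt_or_gt_of_ne hx0 with hneg | hpos
      · have hxr : x < -r := by rcases abs_cases x with ⟨he, _⟩ | ⟨he, _⟩ <;> linarith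
        have ho : IsOpen {y : ℝ | y < -r} := isOpen_Iio
        filter_upwards [ho.mem_nhds hxr] with y hy
        have hy' : y < -r := hy
        have hya : ¬ |y| ≤ r := by
          rw [not_le]; rcases abs_cases y with ⟨he, _⟩ | ⟨he, _⟩ <;> linarith
        rw [hw]; simp only [if_neg hya, Real.sign_of_neg (by linarith : y < 0),
          Real.sign_of_neg hneg]
      · have hxr : r < x := by rcases abs_cases x with ⟨he, _⟩ | ⟨he, _⟩ <;> linarith
        have ho : IsOpen {y : ℝ | r < y} := isOpen_Ioi
        filter_upwards [ho.mem_nhds hxr] with y hy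
        have hy' : r < y := hy
        have hya : ¬ |y| ≤ r := by
          rw [not_le]; rcases abs_cases y with ⟨he, _⟩ | ⟨he, _⟩ <;> linarith
        rw [hw]; simp only [if_neg hya, Real.sign_of_pos (by linarith : 0 < y),
          Real.sign_of_pos hpos]
    exact hd.congr_of_eventuallyEq hev
  refine ⟨?_, ?_, part3, part4, ?_⟩
  · intro x hx
    rw [hclamp]
    rw [abs_mul]
    have h1 : |max (-r) (min x r)| ≤ r := by
      rw [abs_le]
      constructor
      · exact le_max_left _ _
      · exact max_le (by linarith) (min_le_right _ _)
    calc |C| * |max (-r) (min x r)| ≤ |C| * r := by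
          exact mul_le_mul_of_nonneg_left h1 (abs_nonneg _)
      _ ≤ 1 := hCabs
  · refine ⟨‖β * C‖₊, LipschitzWith.lipschitzOnWith ?_⟩
    rw [lipschitzWith_iff_dist_le_mul]
    intro x y
    simp only [hclamp, Real.dist_eq]
    have key : |max (-r) (min x r) - max (-r) (min y r)| ≤ |x - y| := by
      rw [max_comm (-r), max_comm (-r) (min y r)]
      refine (abs_max_sub_max_le_abs _ _ _).trans ?_
      have := abs_min_sub_min_le_max x r y r
      simpa using this
    calc |β * (C * max (-r) (min x r)) - β * (C * max (-r) (min y r))|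
        = |β * C| * |max (-r) (min x r) - max (-r) (min y r)| := by
          rw [← abs_mul]; ring_nf
      _ ≤ |β * C| * |x - y| := mul_le_mul_of_nonneg_left key (abs_nonneg _)
      _ = ‖β * C‖₊ * |x - y| := by rw [coe_nnnorm, Real.norm_eq_abs]
  · intro x hxR hxr
    rcases lt_or_gt_of_ne (fun h => hxr h) with h | h
    · rw [hf]; simp only [if_pos h]
      exact part3 x h
    · rw [hf]; simp only [if_neg (not_lt.mpr h.le), sub_self]
      exact part4 x h hxR
end

section
/- Let m < 0, ε > 0, α > 0, R > 0, and suppose α < min{ (2^{m−3}(1+R²)^{−3/2})^{1/(1−m)}, G₀ } for some G₀ > 0, and ε < min{ (G₀−α)/R², α/(2|m|R²(1+R²)), 2α/(2+R²) }. Then for the function v(x) = ε|x|²/2 + α on B_R(0) ⊂ ℝ^N, the following pointwise inequality holds for |x| ≤ R: div( (ε+v)^m ∇v/√(|∇v|²+ε²) + ε∇v ) > (ε+v)^{m−1}·α / (2(1+R²)^{3/2}); in particular div( (ε+v)^m ∇v/√(|∇v|²+ε²) + ε∇v ) > v − f whenever f ≥ 0. -/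
set_option maxHeartbeats 1000000 in
/-- The radial function v(x) = ε|x|²/2 + α is a strict subsolution of the regularized
problem: its (explicitly computed) divergence exceeds both v − f (for f ≥ 0) and the
lower bound (ε+v)^{m−1}α/(2(1+R²)^{3/2}), under the smallness conditions on α, ε. -/
theorem stmt17 (m : ℝ) (hm : m < 0) (N : ℕ) (hN : 1 ≤ N) (ε α R G₀ : ℝ)
    (hε : 0 < ε) (hα : 0 < α) (hR : 0 < R) (hG₀ : 0 < G₀)
    (hα' : α < min ((2 ^ (m - 3) * (1 + R ^ 2) ^ (-(3 : ℝ) / 2)) ^ (1 / (1 - m))) G₀)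
    (hε' : ε < min (min ((G₀ - α) / R ^ 2) (α / (2 * |m| * R ^ 2 * (1 + R ^ 2))))
      (2 * α / (2 + R ^ 2)))
    (f : ℝ) (hf : 0 ≤ f)
    (x : EuclideanSpace ℝ (Fin N)) (hx : ‖x‖ ≤ R) :
    (ε + (ε * ‖x‖ ^ 2 / 2 + α)) ^ (m - 1) * (m * ε * ‖x‖ ^ 2 / Real.sqrt (1 + ‖x‖ ^ 2))
      + (ε + (ε * ‖x‖ ^ 2 / 2 + α)) ^ m *
          ((1 + ‖x‖ ^ 2) ^ (-(3 : ℝ) / 2) + ((N : ℝ) - 1) / Real.sqrt (1 + ‖x‖ ^ 2))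
      + ε ^ 2 * N > (ε * ‖x‖ ^ 2 / 2 + α) - f ∧
    (ε + (ε * ‖x‖ ^ 2 / 2 + α)) ^ (m - 1) * (m * ε * ‖x‖ ^ 2 / Real.sqrt (1 + ‖x‖ ^ 2))
      + (ε + (ε * ‖x‖ ^ 2 / 2 + α)) ^ m *
          ((1 + ‖x‖ ^ 2) ^ (-(3 : ℝ) / 2) + ((N : ℝ) - 1) / Real.sqrt (1 + ‖x‖ ^ 2))
      + ε ^ 2 * N >
      (ε + (ε * ‖x‖ ^ 2 / 2 + α)) ^ (m - 1) * α / (2 * (1 + R ^ 2) ^ ((3 : ℝ) / 2)) := by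
  set r : ℝ := ‖x‖ with hrdef
  have hr0 : 0 ≤ r := norm_nonneg x
  have hrR : r ≤ R := hx
  clear_value r
  have hr2 : r ^ 2 ≤ R ^ 2 := by nlinarith
  set P : ℝ := 1 + r ^ 2 with hPdef
  set Q : ℝ := 1 + R ^ 2 with hQdef
  have hP1 : (1 : ℝ) ≤ P := by nlinarith
  have hQ1 : (1 : ℝ) ≤ Q := by nlinarith
  have hP0 : (0 : ℝ) < P := by linarith
  have hQ0 : (0 : ℝ) < Q := by linarith
  have hPQ : P ≤ Q := by nlinarith
  set s : ℝ := Real.sqrt P with hsdef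
  set t : ℝ := Real.sqrt Q with htdef
  have hs1 : (1 : ℝ) ≤ s := by
    rw [hsdef, show (1:ℝ) = Real.sqrt 1 by simp]
    exact Real.sqrt_le_sqrt hP1
  have ht1 : (1 : ℝ) ≤ t := by
    rw [htdef, show (1:ℝ) = Real.sqrt 1 by simp]
    exact Real.sqrt_le_sqrt hQ1
  have hs0 : (0 : ℝ) < s := by linarith
  have ht0 : (0 : ℝ) < t := by linarith
  have hst : s ≤ t := Real.sqrt_le_sqrt hPQ
  have hssq : s ^ 2 = P := Real.sq_sqrt hP0.le
  have htsq : t ^ 2 = Q := Real.sq_sqrt hQ0.le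
  clear_value s t
  clear_value P Q
  set w : ℝ := ε + (ε * r ^ 2 / 2 + α) with hwdef
  have hαw : α ≤ w := by
    have : 0 ≤ ε * r ^ 2 := by positivity
    simp only [hwdef]; linarith
  have hw0 : (0 : ℝ) < w := lt_of_lt_of_le hα hαw
  clear_value w
  have hε3 : ε < 2 * α / (2 + R ^ 2) := lt_of_lt_of_le hε' (min_le_right _ _)
  have hw2α : w < 2 * α := by
    have h2R : (0:ℝ) < 2 + R ^ 2 := by positivity
    have h : ε * (2 + R ^ 2) < 2 * α := by
      rw [← lt_div_iff₀ h2R]; exact hε3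
    have h' : ε * (2 + r ^ 2) ≤ ε * (2 + R ^ 2) :=
      mul_le_mul_of_nonneg_left (by linarith) hε.le
    simp only [hwdef]; nlinarith
  have habs : |m| = -m := abs_of_neg hm
  have hε2 : ε < α / (2 * |m| * R ^ 2 * Q) := lt_of_lt_of_le hε'
    (le_trans (min_le_left _ _) (min_le_right _ _))
  have hm' : (0:ℝ) < -m := by linarith
  have hmεR : 2 * Q * ((-m) * ε * R ^ 2) < α := by
    have hden : (0:ℝ) < 2 * |m| * R ^ 2 * Q := by
      rw [habs]; positivity
    have h := (lt_div_iff₀ hden).mp hε2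
    calc 2 * Q * ((-m) * ε * R ^ 2) = ε * (2 * |m| * R ^ 2 * Q) := by rw [habs]; ring
      _ < α := h
  set A : ℝ := w ^ (m - 1) with hAdef
  have hA0 : (0 : ℝ) < A := Real.rpow_pos_of_pos hw0 _
  have hwm : A * w = w ^ m := by
    rw [hAdef, ← Real.rpow_add_one hw0.ne' (m - 1)]; norm_num
  have hwm0 : (0 : ℝ) < w ^ m := Real.rpow_pos_of_pos hw0 _
  have hP32 : P ^ (-(3 : ℝ) / 2) = 1 / (P * s) := by
    have h1 : P ^ ((3 : ℝ) / 2) = P * s := by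
      rw [show (3:ℝ)/2 = 1 + 1/2 by norm_num, Real.rpow_add hP0, Real.rpow_one,
        hsdef, Real.sqrt_eq_rpow]
    rw [show -(3:ℝ)/2 = -((3:ℝ)/2) by ring, Real.rpow_neg hP0.le, h1, one_div]
  have hQ32 : Q ^ ((3 : ℝ) / 2) = Q * t := by
    rw [show (3:ℝ)/2 = 1 + 1/2 by norm_num, Real.rpow_add hQ0, Real.rpow_one,
      htdef, Real.sqrt_eq_rpow]
  have hQ320 : (0:ℝ) < Q ^ ((3:ℝ)/2) := Real.rpow_pos_of_pos hQ0 _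
  -- the core estimate
  have core : A * α / (2 * Q ^ ((3:ℝ)/2)) ≤ A * (m * ε * r ^ 2 / s) + w ^ m * P ^ (-(3:ℝ)/2) := by
    rw [hP32, hQ32, ← hwm]
    have heq : A * (m * ε * r ^ 2 / s) + A * w * (1 / (P * s))
        = A * (m * ε * r ^ 2 * P + w) / (P * s) := by
      field_simp
    rw [heq, div_le_div_iff₀ (by positivity) (by positivity)]
    have h2 : α * (P * s) ≤ (m * ε * r ^ 2 * P + w) * (2 * (Q * t)) := by
      have f1 : m * ε * R ^ 2 ≤ m * ε * r ^ 2 := by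
        have hmε : m * ε ≤ 0 := mul_nonpos_of_nonpos_of_nonneg hm.le hε.le
        calc m * ε * R ^ 2 = (m * ε) * R ^ 2 := by ring
          _ ≤ (m * ε) * r ^ 2 := by
              rcases lt_or_eq_of_le hmε with h | h
              · exact (mul_le_mul_left_of_neg h).mpr hr2
              · rw [h]; simp
          _ = m * ε * r ^ 2 := by ring
      have f1p : m * ε * R ^ 2 * P ≤ m * ε * r ^ 2 * P :=
        mul_le_mul_of_nonneg_right f1 hP0.le
      have fPQ : (-m) * ε * R ^ 2 * P ≤ (-m) * ε * R ^ 2 * Q :=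
        mul_le_mul_of_nonneg_left hPQ (by positivity)
      have a2 : α / 2 ≤ m * ε * r ^ 2 * P + w := by
        have : (-m) * ε * R ^ 2 * Q < α / 2 := by linarith [hmεR]
        have hrw : m * ε * R ^ 2 * P = -((-m) * ε * R ^ 2 * P) := by ring
        linarith [f1p, fPQ, hαw, hrw.le, hrw.ge]
      have a3 : (α / 2) * (2 * (Q * t)) ≤ (m * ε * r ^ 2 * P + w) * (2 * (Q * t)) :=
        mul_le_mul_of_nonneg_right a2 (by positivity)
      have a4 : α * (P * s) ≤ α * (Q * t) := by
        have : P * s ≤ Q * t := mul_le_mul hPQ hst hs0.le hQ0.le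
        exact mul_le_mul_of_nonneg_left this hα.le
      have a5 : (α / 2) * (2 * (Q * t)) = α * (Q * t) := by ring
      linarith
    calc A * α * (P * s) = A * (α * (P * s)) := by ring
      _ ≤ A * ((m * ε * r ^ 2 * P + w) * (2 * (Q * t))) :=
          mul_le_mul_of_nonneg_left h2 hA0.le
      _ = A * (m * ε * r ^ 2 * P + w) * (2 * (Q * t)) := by ring
  -- auxiliary positivity
  have hN1 : (1:ℝ) ≤ (N:ℝ) := by exact_mod_cast hN
  have hNs : (0:ℝ) ≤ w ^ m * (((N:ℝ) - 1) / s) :=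
    mul_nonneg hwm0.le (div_nonneg (by linarith) hs0.le)
  have hεN : (0:ℝ) < ε ^ 2 * N := by
    have : (0:ℝ) < (N:ℝ) := by linarith
    positivity
  have hexpand : w ^ m * (P ^ (-(3:ℝ)/2) + ((N:ℝ) - 1) / s)
      = w ^ m * P ^ (-(3:ℝ)/2) + w ^ m * (((N:ℝ) - 1) / s) := by ring
  -- part 2
  have part2 : A * (m * ε * r ^ 2 / s) + w ^ m * (P ^ (-(3:ℝ)/2) + ((N:ℝ) - 1) / s)
      + ε ^ 2 * N > A * α / (2 * Q ^ ((3:ℝ)/2)) := by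
    rw [hexpand]; linarith
  refine ⟨?_, part2⟩
  -- part 1 : show RHS₂ > 2α ≥ v - f
  have h1m : (0:ℝ) < 1 - m := by linarith
  have hα'' : α < (2 ^ (m - 3) * Q ^ (-(3 : ℝ) / 2)) ^ (1 / (1 - m)) :=
    lt_of_lt_of_le hα' (min_le_left _ _)
  have hK0 : (0:ℝ) < 2 ^ (m - 3) * Q ^ (-(3 : ℝ) / 2) :=
    mul_pos (Real.rpow_pos_of_pos two_pos _) (Real.rpow_pos_of_pos hQ0 _)
  have hstep : α ^ (1 - m) < 2 ^ (m - 3) * Q ^ (-(3 : ℝ) / 2) := by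
    have h := Real.rpow_lt_rpow hα.le hα'' h1m
    rwa [← Real.rpow_mul hK0.le, one_div,
      inv_mul_cancel₀ (by linarith : (1:ℝ) - m ≠ 0), Real.rpow_one] at h
  have hα1m0 : (0:ℝ) < α ^ (1 - m) := Real.rpow_pos_of_pos hα _
  have hKinv : (2 ^ (m - 3) * Q ^ (-(3 : ℝ) / 2) : ℝ)⁻¹ = 2 ^ ((3:ℝ) - m) * Q ^ ((3:ℝ)/2) := by
    rw [mul_inv, ← Real.rpow_neg (by norm_num : (0:ℝ) ≤ 2), ← Real.rpow_neg hQ0.le,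
      show -(m - 3) = (3:ℝ) - m by ring, show -(-(3:ℝ)/2) = (3:ℝ)/2 by ring]
  have hαm : 2 ^ ((3:ℝ) - m) * Q ^ ((3:ℝ)/2) < α ^ (m - 1) := by
    have hinv : (2 ^ (m - 3) * Q ^ (-(3 : ℝ) / 2) : ℝ)⁻¹ < (α ^ (1 - m))⁻¹ :=
      inv_strictAnti₀ hα1m0 hstep
    rwa [hKinv, show m - 1 = -(1 - m) by ring, Real.rpow_neg hα.le] at *
  have h2m0 : (0:ℝ) < (2:ℝ) ^ (m - 1) := Real.rpow_pos_of_pos two_pos _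
  have hpow2 : (2:ℝ) ^ (m - 1) * (2:ℝ) ^ ((3:ℝ) - m) = 4 := by
    rw [← Real.rpow_add two_pos, show m - 1 + ((3:ℝ) - m) = 2 by ring,
      show (2:ℝ) = ((2:ℕ):ℝ) from by norm_num, Real.rpow_natCast]
    norm_num
  have h2a : ((2:ℝ) * α) ^ (m - 1) = (2:ℝ) ^ (m - 1) * α ^ (m - 1) :=
    Real.mul_rpow (by norm_num) hα.le
  have hA2α : ((2:ℝ) * α) ^ (m - 1) < A :=
    Real.rpow_lt_rpow_of_neg hw0 hw2α (by linarith)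
  have hAbig : 4 * Q ^ ((3:ℝ)/2) < A := by
    have h := mul_lt_mul_of_pos_left hαm h2m0
    rw [← mul_assoc, hpow2] at h
    rw [h2a] at hA2α
    linarith
  have hRHS : 2 * α < A * α / (2 * Q ^ ((3:ℝ)/2)) := by
    rw [lt_div_iff₀ (by positivity)]
    have h := mul_lt_mul_of_pos_right hAbig hα
    calc 2 * α * (2 * Q ^ ((3:ℝ)/2)) = 4 * Q ^ ((3:ℝ)/2) * α := by ring
      _ < A * α := h
  have : (ε * r ^ 2 / 2 + α) - f < 2 * α := by
    have : ε * r ^ 2 / 2 + α < w := by simp only [hwdef]; linarith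
    linarith
  linarith
end
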